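/- Let Γ be a discrete subgroup of Sp(n,ℝ), i.e. a subgroup such that Γ ∩ K is finite for every compact subset K of Sp(n,ℝ). Then Γ acts properly discontinuously on the Siegel upper half plane H_n: for any two compact subsets C₁ and C₂ of H_n, the set { γ ∈ Γ : (γ·C₁) ∩ C₂ ≠ ∅ } is finite, where γ·Ω = (AΩ+B)(CΩ+D)^{-1} for γ = [[A,B],[C,D]]. -/

import Mathlib

/-!
For `γ = [[A, B], [C, D]]` in `Sp(n, ℝ)` put `N = AΩ + B` and `M = CΩ + D`. The symplectic
relation `γᵀ J γ = J`, applied to the column `(Ω; 1)`, gives `Nᴴ M - Mᴴ N = Ωᴴ - Ω`. Hence `M` is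
invertible and, for `Ω' = N M⁻¹`, `Mᴴ (Im Ω') M = Im Ω`. If `Ω ∈ C₁` and `Ω' ∈ C₂`, the imaginary
parts of `C₂` are uniformly coercive and those of `C₁` are bounded, so `M` is bounded, and then
so is `N = Ω' M`. Finally `γ` is recovered continuously from `(Ω, N, M)`, because
`C = Im M (Im Ω)⁻¹` and `D = Re M - C Re Ω` (likewise for `A, B`). So all such `γ` lie in a compact
subset of `Sp(n, ℝ)`, which meets the discrete group `Γ` in a finite set.
-/

open Matrix Complex
open scoped ComplexOrder

section HermitianForms

lemma conjTranspose_sub_self_of_isSymm {n : Type*} {Ω : Matrix n n ℂ} (h : Ω.IsSymm) :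
    Ωᴴ - Ω = (-2 * I) • (Ω.map im).map ofReal := by
  ext i j
  have hji : Ω j i = Ω i j := by rw [← h.apply i j]
  simp only [Matrix.sub_apply, conjTranspose_apply, hji, Matrix.smul_apply, map_apply,
    smul_eq_mul]
  rw [show star (Ω i j) = (starRingEnd ℂ) (Ω i j) from rfl, ← neg_sub, sub_conj]
  push_cast
  ring

variable {n : Type*} [Fintype n]

lemma re_star_dotProduct_map_ofReal_mulVec (Y : Matrix n n ℝ) (x : n → ℂ) :
    (star x ⬝ᵥ (Y.map ofReal *ᵥ x)).re =
      (re ∘ x) ⬝ᵥ (Y *ᵥ (re ∘ x)) + (im ∘ x) ⬝ᵥ (Y *ᵥ (im ∘ x)) := by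
  simp only [dotProduct, mulVec, re_sum, Finset.mul_sum, ← Finset.sum_add_distrib]
  refine Finset.sum_congr rfl fun i _ => Finset.sum_congr rfl fun j _ => ?_
  simp

lemma Matrix.PosDef.map_ofReal {Y : Matrix n n ℝ} (hY : Y.PosDef) : (Y.map ofReal).PosDef := by
  have hYc : (Y.map ofReal).IsHermitian :=
    hY.isHermitian.map _ fun _ => (conj_ofReal _).symm
  refine PosDef.of_dotProduct_mulVec_pos hYc fun x hx => RCLike.pos_iff.mpr ⟨?_, ?_⟩
  · have hreim : re ∘ x ≠ 0 ∨ im ∘ x ≠ 0 := by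
      by_contra! h
      exact hx (funext fun i => Complex.ext (congrFun h.1 i) (congrFun h.2 i))
    have hre := hY.posSemidef.dotProduct_mulVec_nonneg (re ∘ x)
    have him := hY.posSemidef.dotProduct_mulVec_nonneg (im ∘ x)
    show 0 < (star x ⬝ᵥ (Y.map ofReal *ᵥ x)).re
    rw [re_star_dotProduct_map_ofReal_mulVec]
    simp only [star_trivial] at hre him
    rcases hreim with h | h
    · exact add_pos_of_pos_of_nonneg (by simpa using hY.dotProduct_mulVec_pos h) him
    · exact add_pos_of_nonneg_of_pos hre (by simpa using hY.dotProduct_mulVec_pos h)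
  · exact hYc.im_star_dotProduct_mulVec_self x

end HermitianForms

section Compactness

lemma IsCompact.exists_forall_norm_apply_le {m n α : Type*} [Fintype m] [Fintype n]
    [NormedAddCommGroup α] {K : Set (Matrix m n α)} (hK : IsCompact K) :
    ∃ R, ∀ M ∈ K, ∀ i j, ‖M i j‖ ≤ R := by
  obtain ⟨R, hR⟩ := hK.exists_bound_of_continuousOn (f := fun M : Matrix m n α => of.symm M)
    continuousOn_id
  exact ⟨R, fun M hM i j => (norm_le_pi_norm (M i) j).trans
    ((norm_le_pi_norm (of.symm M) i).trans (hR M hM))⟩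

lemma isCompact_setOf_forall_norm_apply_le {m n α : Type*} [NormedAddCommGroup α]
    [ProperSpace α] (r : ℝ) : IsCompact {M : Matrix m n α | ∀ i j, ‖M i j‖ ≤ r} := by
  have : {M : Matrix m n α | ∀ i j, ‖M i j‖ ≤ r} =
      Set.univ.pi fun _ => Set.univ.pi fun _ => Metric.closedBall 0 r := by
    ext M
    simp [Set.pi]
    rfl
  rw [this]
  exact isCompact_univ_pi fun _ => isCompact_univ_pi fun _ => isCompact_closedBall 0 r

variable {n 𝕜 : Type*} [Fintype n] [RCLike 𝕜]

lemma IsCompact.exists_pos_mul_norm_sq_le_re_dotProduct_mulVec {K : Set (Matrix n n 𝕜)}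
    (hK : IsCompact K) (hpos : ∀ Y ∈ K, Y.PosDef) :
    ∃ ε > 0, ∀ Y ∈ K, ∀ x : n → 𝕜, ε * ‖x‖ ^ 2 ≤ RCLike.re (star x ⬝ᵥ (Y *ᵥ x)) := by
  have hcont : Continuous fun p : Matrix n n 𝕜 × (n → 𝕜) =>
      RCLike.re (star p.2 ⬝ᵥ (p.1 *ᵥ p.2)) := by
    fun_prop
  obtain ⟨ε, hε, hle⟩ := (hK.prod (isCompact_sphere (0 : n → 𝕜) 1)).exists_forall_le'
    hcont.continuousOn (a := 0) fun p hp => by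
      have hp2 : p.2 ≠ 0 := ne_zero_of_mem_unit_sphere ⟨p.2, hp.2⟩
      exact (RCLike.pos_iff.mp ((hpos p.1 hp.1).dotProduct_mulVec_pos hp2)).1
  refine ⟨ε, hε, fun Y hY x => ?_⟩
  rcases eq_or_ne x 0 with rfl | hx
  · simp
  have hxpos : 0 < ‖x‖ := norm_pos_iff.mpr hx
  set u : n → 𝕜 := (‖x‖⁻¹ : 𝕜) • x
  have hu : u ∈ Metric.sphere (0 : n → 𝕜) 1 := by
    simp [u, norm_smul, hxpos.ne']
  have hxu : x = (‖x‖ : 𝕜) • u := by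
    simp [u, smul_smul, RCLike.ofReal_ne_zero.mpr hxpos.ne']
  have hq : RCLike.re (star x ⬝ᵥ (Y *ᵥ x)) = ‖x‖ ^ 2 * RCLike.re (star u ⬝ᵥ (Y *ᵥ u)) := by
    conv_lhs => rw [hxu, star_smul, mulVec_smul, dotProduct_smul, smul_dotProduct]
    simp [smul_eq_mul, ← mul_assoc, sq]
  rw [hq, mul_comm]
  exact mul_le_mul_of_nonneg_left (hle (Y, u) ⟨hY, hu⟩) (by positivity)

lemma norm_apply_le_of_conjTranspose_mul_mul_eq {ε R : ℝ} (hε : 0 < ε)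
    {A B C : Matrix n n 𝕜} (hB : ∀ x, ε * ‖x‖ ^ 2 ≤ RCLike.re (star x ⬝ᵥ (B *ᵥ x)))
    (hC : ∀ j, RCLike.re (C j j) ≤ R) (h : Aᴴ * B * A = C) (i j : n) :
    ‖A i j‖ ≤ √(R / ε) := by
  set x : n → 𝕜 := fun k => A k j
  have hjj : C j j = star x ⬝ᵥ (B *ᵥ x) := by
    rw [← h, Matrix.mul_assoc]
    simp [mul_apply, dotProduct, mulVec, x]
  have hx : ‖x‖ ^ 2 ≤ R / ε := by
    rw [le_div_iff₀ hε, mul_comm]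
    exact (hB x).trans (hjj ▸ hC j)
  calc ‖A i j‖ ≤ ‖x‖ := norm_le_pi_norm x i
    _ ≤ √(R / ε) := (abs_norm x).symm ▸ Real.abs_le_sqrt hx

end Compactness

section SiegelAction

variable {n : Type*} [Fintype n] [DecidableEq n]

lemma conjTranspose_fromRows_mul_fromBlocks_mul_fromRows {m R : Type*} [CommRing R] [StarRing R]
    (X Y : Matrix n m R) :
    (fromRows X Y)ᴴ * (fromBlocks 0 1 (-1) 0 : Matrix (n ⊕ n) (n ⊕ n) R) * fromRows X Y =
      Xᴴ * Y - Yᴴ * X := by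
  rw [conjTranspose_fromRows_eq_fromCols_conjTranspose, Matrix.mul_assoc,
    fromBlocks_mul_fromRows, fromCols_mul_fromRows]
  simp only [Matrix.zero_mul, Matrix.one_mul, Matrix.neg_mul, zero_add, add_zero, Matrix.mul_neg]
  abel

lemma conjTranspose_map_ofReal_mul_mul_of_transpose_mul_mul {γ J : Matrix n n ℝ}
    (h : γᵀ * J * γ = J) : (γ.map ofReal)ᴴ * J.map ofReal * γ.map ofReal = J.map ofReal := by
  have := congrArg (ofRealHom.mapMatrix) h
  rw [RingHom.map_mul, RingHom.map_mul] at this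
  rwa [← conjTranspose_map _ fun _ => (conj_ofReal _).symm, conjTranspose_eq_transpose_of_trivial]

def siegelNum (γ : Matrix (n ⊕ n) (n ⊕ n) ℝ) (Ω : Matrix n n ℂ) : Matrix n n ℂ :=
  γ.toBlocks₁₁.map ofReal * Ω + γ.toBlocks₁₂.map ofReal

def siegelDen (γ : Matrix (n ⊕ n) (n ⊕ n) ℝ) (Ω : Matrix n n ℂ) : Matrix n n ℂ :=
  γ.toBlocks₂₁.map ofReal * Ω + γ.toBlocks₂₂.map ofReal

lemma map_ofReal_mul_fromRows_eq (γ : Matrix (n ⊕ n) (n ⊕ n) ℝ) (Ω : Matrix n n ℂ) :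
    γ.map ofReal * fromRows Ω (1 : Matrix n n ℂ) = fromRows (siegelNum γ Ω) (siegelDen γ Ω) := by
  conv_lhs => rw [← fromBlocks_toBlocks γ]
  rw [fromBlocks_map, fromBlocks_mul_fromRows, Matrix.mul_one, Matrix.mul_one]
  rfl

lemma siegelNum_conjTranspose_mul_siegelDen_sub {γ : Matrix (n ⊕ n) (n ⊕ n) ℝ}
    (hγ : γᵀ * fromBlocks 0 1 (-1) 0 * γ = fromBlocks 0 1 (-1) 0) (Ω : Matrix n n ℂ) :
    (siegelNum γ Ω)ᴴ * siegelDen γ Ω - (siegelDen γ Ω)ᴴ * siegelNum γ Ω = Ωᴴ - Ω := by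
  have hJ : (fromBlocks 0 1 (-1) 0 : Matrix (n ⊕ n) (n ⊕ n) ℝ).map ofReal =
      fromBlocks 0 1 (-1) 0 := by
    simp [fromBlocks_map, Matrix.map_neg]
  set Z := fromRows Ω (1 : Matrix n n ℂ)
  calc (siegelNum γ Ω)ᴴ * siegelDen γ Ω - (siegelDen γ Ω)ᴴ * siegelNum γ Ω
      = (γ.map ofReal * Z)ᴴ * (fromBlocks 0 1 (-1) 0 : Matrix (n ⊕ n) (n ⊕ n) ℂ) *
          (γ.map ofReal * Z) := by
        rw [map_ofReal_mul_fromRows_eq, conjTranspose_fromRows_mul_fromBlocks_mul_fromRows]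
    _ = Zᴴ * ((γ.map ofReal)ᴴ * (fromBlocks 0 1 (-1) 0 : Matrix (n ⊕ n) (n ⊕ n) ℝ).map ofReal *
          γ.map ofReal) * Z := by
        rw [hJ, conjTranspose_mul]
        simp only [Matrix.mul_assoc]
    _ = Ωᴴ - Ω := by
        rw [conjTranspose_map_ofReal_mul_mul_of_transpose_mul_mul hγ, hJ,
          conjTranspose_fromRows_mul_fromBlocks_mul_fromRows]
        simp

lemma isUnit_det_siegelDen {γ : Matrix (n ⊕ n) (n ⊕ n) ℝ}
    (hγ : γᵀ * fromBlocks 0 1 (-1) 0 * γ = fromBlocks 0 1 (-1) 0) {Ω : Matrix n n ℂ}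
    (hΩs : Ω.IsSymm) (hΩ : (Ω.map im).PosDef) : IsUnit (siegelDen γ Ω).det := by
  rw [isUnit_iff_ne_zero]
  intro hdet
  obtain ⟨v, hv, hMv⟩ := exists_mulVec_eq_zero_iff.mpr hdet
  have hzero : star v ⬝ᵥ (((siegelNum γ Ω)ᴴ * siegelDen γ Ω -
      (siegelDen γ Ω)ᴴ * siegelNum γ Ω) *ᵥ v) = 0 := by
    rw [sub_mulVec, ← mulVec_mulVec, ← mulVec_mulVec, hMv, dotProduct_sub,
      dotProduct_mulVec _ (siegelDen γ Ω)ᴴ, ← star_mulVec, hMv]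
    simp
  rw [siegelNum_conjTranspose_mul_siegelDen_sub hγ, conjTranspose_sub_self_of_isSymm hΩs,
    smul_mulVec, dotProduct_smul, smul_eq_mul, mul_eq_zero] at hzero
  rcases hzero with h | h
  · norm_num at h
  · exact (hΩ.map_ofReal.dotProduct_mulVec_pos hv).ne' h

lemma siegelDen_conjTranspose_mul_mul_siegelDen {γ : Matrix (n ⊕ n) (n ⊕ n) ℝ}
    (hγ : γᵀ * fromBlocks 0 1 (-1) 0 * γ = fromBlocks 0 1 (-1) 0) {Ω : Matrix n n ℂ}
    (hΩs : Ω.IsSymm) (hΩ : (Ω.map im).PosDef)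
    (hΩ's : (siegelNum γ Ω * (siegelDen γ Ω)⁻¹).IsSymm) :
    (siegelDen γ Ω)ᴴ * ((siegelNum γ Ω * (siegelDen γ Ω)⁻¹).map im).map ofReal *
      siegelDen γ Ω = (Ω.map im).map ofReal := by
  have hrel := siegelNum_conjTranspose_mul_siegelDen_sub hγ Ω
  set M := siegelDen γ Ω
  set Ω' := siegelNum γ Ω * M⁻¹
  have hN : siegelNum γ Ω = Ω' * M := by
    rw [Matrix.mul_assoc, nonsing_inv_mul _ (isUnit_det_siegelDen hγ hΩs hΩ), Matrix.mul_one]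
  rw [hN, conjTranspose_mul, conjTranspose_sub_self_of_isSymm hΩs] at hrel
  have hcongr : Mᴴ * (Ω'ᴴ - Ω') * M = (-2 * I) • (Mᴴ * (Ω'.map im).map ofReal * M) := by
    rw [conjTranspose_sub_self_of_isSymm hΩ's, Matrix.mul_smul, Matrix.smul_mul]
  refine smul_right_injective _ (by norm_num : (-2 * I : ℂ) ≠ 0) ?_
  dsimp only
  rw [← hcongr, ← hrel]
  simp only [Matrix.mul_sub, Matrix.sub_mul, Matrix.mul_assoc]

end SiegelAction

section RealCoefficients

variable {n : Type*} [Fintype n]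

lemma map_im_map_ofReal_mul_add (P Q : Matrix n n ℝ) (Ω : Matrix n n ℂ) :
    (P.map ofReal * Ω + Q.map ofReal).map im = P * Ω.map im := by
  ext i j
  simp [mul_apply]

lemma map_re_map_ofReal_mul_add (P Q : Matrix n n ℝ) (Ω : Matrix n n ℂ) :
    (P.map ofReal * Ω + Q.map ofReal).map re = P * Ω.map re + Q := by
  ext i j
  simp [mul_apply]

variable [DecidableEq n]

noncomputable def realCoeffs (Ω M : Matrix n n ℂ) : Matrix n n ℝ × Matrix n n ℝ :=
  (M.map im * (Ω.map im)⁻¹, M.map re - M.map im * (Ω.map im)⁻¹ * Ω.map re)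

lemma realCoeffs_map_ofReal_mul_add {Ω : Matrix n n ℂ} (hΩ : IsUnit (Ω.map im).det)
    (P Q : Matrix n n ℝ) : realCoeffs Ω (P.map ofReal * Ω + Q.map ofReal) = (P, Q) := by
  simp only [realCoeffs, map_im_map_ofReal_mul_add, map_re_map_ofReal_mul_add,
    Matrix.mul_assoc, mul_nonsing_inv _ hΩ, Matrix.mul_one, add_sub_cancel_left]

noncomputable def ofSiegelNumDen (Ω N M : Matrix n n ℂ) : Matrix (n ⊕ n) (n ⊕ n) ℝ :=
  fromBlocks (realCoeffs Ω N).1 (realCoeffs Ω N).2 (realCoeffs Ω M).1 (realCoeffs Ω M).2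

lemma continuousOn_ofSiegelNumDen :
    ContinuousOn (fun p : Matrix n n ℂ × Matrix n n ℂ × Matrix n n ℂ =>
      ofSiegelNumDen p.1 p.2.1 p.2.2) {p | IsUnit (p.1.map im).det} := by
  have hinv : ContinuousOn (fun p : Matrix n n ℂ × Matrix n n ℂ × Matrix n n ℂ =>
      (p.1.map im)⁻¹) {p | IsUnit (p.1.map im).det} := fun p hp =>
    (continuousAt_matrix_inv _ (Ring.inverse_eq_inv' (G₀ := ℝ) ▸ continuousAt_inv₀ hp.ne_zero)
      |>.comp (by fun_prop : Continuous fun p : Matrix n n ℂ × Matrix n n ℂ × Matrix n n ℂ =>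
        p.1.map im).continuousAt).continuousWithinAt
  unfold ofSiegelNumDen realCoeffs
  fun_prop

lemma ofSiegelNumDen_siegelNum_siegelDen (γ : Matrix (n ⊕ n) (n ⊕ n) ℝ) {Ω : Matrix n n ℂ}
    (hΩ : IsUnit (Ω.map im).det) : ofSiegelNumDen Ω (siegelNum γ Ω) (siegelDen γ Ω) = γ := by
  simp only [ofSiegelNumDen, siegelNum, siegelDen, realCoeffs_map_ofReal_mul_add hΩ,
    fromBlocks_toBlocks]

end RealCoefficients

theorem stmt13 {n : ℕ} (Γ : Set (Matrix (Fin n ⊕ Fin n) (Fin n ⊕ Fin n) ℝ))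
    (hsymp : ∀ γ ∈ Γ, γᵀ *
        (fromBlocks 0 1 (-1) 0 : Matrix (Fin n ⊕ Fin n) (Fin n ⊕ Fin n) ℝ) * γ =
      (fromBlocks 0 1 (-1) 0 : Matrix (Fin n ⊕ Fin n) (Fin n ⊕ Fin n) ℝ))
    (hdiscrete : ∀ K : Set (Matrix (Fin n ⊕ Fin n) (Fin n ⊕ Fin n) ℝ),
      IsCompact K → (Γ ∩ K).Finite)
    (C₁ C₂ : Set (Matrix (Fin n) (Fin n) ℂ))
    (hC₁H : ∀ Ω ∈ C₁, Ω.IsSymm ∧ (Matrix.of fun i j => (Ω i j).im).PosDef)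
    (hC₂H : ∀ Ω ∈ C₂, Ω.IsSymm ∧ (Matrix.of fun i j => (Ω i j).im).PosDef)
    (hC₁ : IsCompact C₁) (hC₂ : IsCompact C₂) :
    {γ ∈ Γ | ∃ Ω ∈ C₁,
      ((γ.toBlocks₁₁).map Complex.ofReal * Ω + (γ.toBlocks₁₂).map Complex.ofReal) *
        ((γ.toBlocks₂₁).map Complex.ofReal * Ω + (γ.toBlocks₂₂).map Complex.ofReal)⁻¹
          ∈ C₂}.Finite := by
  obtain ⟨R, hR⟩ := hC₁.exists_forall_norm_apply_le
  have hImC₂ : IsCompact ((fun Ω : Matrix (Fin n) (Fin n) ℂ => (Ω.map im).map ofReal) '' C₂) :=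
    hC₂.image (by fun_prop)
  obtain ⟨ε, hε, hcoer⟩ := hImC₂.exists_pos_mul_norm_sq_le_re_dotProduct_mulVec
    (by rintro _ ⟨Ω, hΩ, rfl⟩; exact (hC₂H Ω hΩ).2.map_ofReal)
  set B := {M : Matrix (Fin n) (Fin n) ℂ | ∀ i j, ‖M i j‖ ≤ √(R / ε)}
  have hB : IsCompact B := isCompact_setOf_forall_norm_apply_le _
  have hK : IsCompact ((fun p => ofSiegelNumDen p.1 p.2.1 p.2.2) ''
      (C₁ ×ˢ (((fun q => q.1 * q.2) '' (C₂ ×ˢ B)) ×ˢ B))) :=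
    (hC₁.prod (((hC₂.prod hB).image (by fun_prop)).prod hB)).image_of_continuousOn
      (continuousOn_ofSiegelNumDen.mono fun p hp =>
        (isUnit_iff_isUnit_det _).mp (hC₁H p.1 hp.1).2.isUnit)
  refine (hdiscrete _ hK).subset ?_
  rintro γ ⟨hγ, Ω, hΩ, hΩ'⟩
  obtain ⟨hΩs, hΩpos⟩ := hC₁H Ω hΩ
  have hM : siegelDen γ Ω ∈ B :=
    norm_apply_le_of_conjTranspose_mul_mul_eq hε (hcoer _ ⟨_, hΩ', rfl⟩)
      (fun j => by simpa using (im_le_norm _).trans (hR Ω hΩ j j))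
      (siegelDen_conjTranspose_mul_mul_siegelDen (hsymp γ hγ) hΩs hΩpos (hC₂H _ hΩ').1)
  have hN : siegelNum γ Ω * (siegelDen γ Ω)⁻¹ * siegelDen γ Ω = siegelNum γ Ω := by
    rw [Matrix.mul_assoc, nonsing_inv_mul _ (isUnit_det_siegelDen (hsymp γ hγ) hΩs hΩpos),
      Matrix.mul_one]
  exact ⟨hγ, (Ω, siegelNum γ Ω, siegelDen γ Ω), ⟨hΩ, ⟨(_, siegelDen γ Ω), ⟨hΩ', hM⟩, hN⟩, hM⟩,
    ofSiegelNumDen_siegelNum_siegelDen γ ((isUnit_iff_isUnit_det _).mp hΩpos.isUnit)⟩
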